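/- For every fixed integer b ≥ 1, the function s ↦ g(b,s) := max{s,1}·E[min{Pois(b/s),b}]/b on (0,∞) is minimized at s = 1; more precisely, g(b,s) is nonincreasing on (0,1] and nondecreasing on [1,∞). -/

import Mathlib

open Real

noncomputable def poissonPMF (μ : ℝ) (k : ℕ) : ℝ :=
  Real.exp (-μ) * μ ^ k / (Nat.factorial k)

noncomputable def expMinPois (μ : ℝ) (c : ℝ) : ℝ :=
  ∑' k : ℕ, poissonPMF μ k * min (k : ℝ) c

noncomputable def gFun (b : ℕ) (s : ℝ) : ℝ :=
  max s 1 * expMinPois ((b : ℝ) / s) (b : ℝ) / (b : ℝ)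

/-! Let `G(μ) = E[min (Pois μ) b]`, so that `g(b,s) = G(b/s)/b` for `s ≤ 1` and `g(b,s) = G(μ)/μ`
with `μ = b/s` for `s ≥ 1`. With `e_m(μ) = ∑_{k<m} μ^k/k!` one has the closed form
`G(μ) = b - e^{-μ} ∑_{j<b} e_{j+1}(μ)`, and `e_{m+1}' = e_m` telescopes its derivative to
`G'(μ) = e^{-μ} e_b(μ) = P(Pois μ < b) ≥ 0`. Moreover `μ G'(μ) - G(μ) = b (P(Pois μ ≤ b) - 1) ≤ 0`,
so `G(μ)/μ` is nonincreasing; since `μ = b/s` decreases in `s`, this gives both monotonicity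
statements. -/

open Finset
open scoped Nat

noncomputable def expPartialSum (n : ℕ) (x : ℝ) : ℝ := ∑ k ∈ range n, x ^ k / k !

lemma expPartialSum_nonneg (n : ℕ) {x : ℝ} (hx : 0 ≤ x) : 0 ≤ expPartialSum n x :=
  sum_nonneg fun _ _ => by positivity

lemma expPartialSum_succ (n : ℕ) (x : ℝ) :
    expPartialSum (n + 1) x = expPartialSum n x + x ^ n / n ! :=
  sum_range_succ _ _

lemma hasDerivAt_pow_succ_div_factorial (n : ℕ) (x : ℝ) :
    HasDerivAt (fun y : ℝ => y ^ (n + 1) / (n + 1)!) (x ^ n / n !) x := by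
  refine ((hasDerivAt_pow (n + 1) x).div_const ((n + 1)! : ℝ)).congr_deriv ?_
  rw [Nat.factorial_succ]
  push_cast
  field_simp

lemma hasDerivAt_expPartialSum_succ (n : ℕ) (x : ℝ) :
    HasDerivAt (expPartialSum (n + 1)) (expPartialSum n x) x := by
  induction n with
  | zero =>
    rw [show expPartialSum 1 = fun _ => 1 from funext fun _ => by simp [expPartialSum]]
    simpa [expPartialSum] using hasDerivAt_const x (1 : ℝ)
  | succ n ih =>
    rw [funext (expPartialSum_succ (n + 1)), expPartialSum_succ]
    exact ih.add (hasDerivAt_pow_succ_div_factorial n x)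

noncomputable def cumExpPartialSum (n : ℕ) (x : ℝ) : ℝ := ∑ j ∈ range n, expPartialSum (j + 1) x

lemma cumExpPartialSum_succ (n : ℕ) (x : ℝ) :
    cumExpPartialSum (n + 1) x = cumExpPartialSum n x + expPartialSum (n + 1) x :=
  sum_range_succ _ _

lemma sum_range_sub_mul_pow_div_factorial (n : ℕ) (x : ℝ) :
    ∑ k ∈ range n, ((n : ℝ) - k) * x ^ k / k ! = cumExpPartialSum n x := by
  induction n with
  | zero => simp [cumExpPartialSum]
  | succ n ih =>
    rw [sum_range_succ, cumExpPartialSum_succ, ← ih, expPartialSum_succ, expPartialSum,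
      ← add_assoc, ← sum_add_distrib]
    push_cast
    congr 1
    · exact sum_congr rfl fun k _ => by ring
    · ring

lemma hasDerivAt_cumExpPartialSum (n : ℕ) (x : ℝ) :
    HasDerivAt (cumExpPartialSum n) (∑ j ∈ range n, expPartialSum j x) x := by
  unfold cumExpPartialSum
  exact HasDerivAt.fun_sum fun j _ => hasDerivAt_expPartialSum_succ j x

lemma cumExpPartialSum_sub_sum_expPartialSum (n : ℕ) (x : ℝ) :
    cumExpPartialSum n x - ∑ j ∈ range n, expPartialSum j x = expPartialSum n x := by
  rw [cumExpPartialSum, ← sum_sub_distrib, sum_range_sub (expPartialSum · x)]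
  simp [expPartialSum]

lemma mul_expPartialSum_add_cumExpPartialSum (n : ℕ) (x : ℝ) :
    x * expPartialSum n x + cumExpPartialSum n x = n * expPartialSum (n + 1) x := by
  induction n with
  | zero => simp [expPartialSum, cumExpPartialSum]
  | succ n ih =>
    have hfac : x * (x ^ n / n !) = (n + 1) * (x ^ (n + 1) / (n + 1)!) := by
      push_cast [Nat.factorial_succ]
      field_simp
      ring
    rw [cumExpPartialSum_succ, expPartialSum_succ (n + 1)]
    push_cast
    linear_combination ih + hfac + x * expPartialSum_succ n x

lemma hasSum_poissonPMF (μ : ℝ) : HasSum (poissonPMF μ) 1 := by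
  have h := (NormedSpace.expSeries_div_hasSum_exp μ).mul_left (exp (-μ))
  rw [← exp_eq_exp_ℝ, ← exp_add, neg_add_cancel, exp_zero] at h
  unfold poissonPMF
  simpa only [mul_div_assoc] using h

lemma expMinPois_natCast (n : ℕ) (μ : ℝ) :
    expMinPois μ n = n - exp (-μ) * cumExpPartialSum n μ := by
  have hdefect : ∀ k ∉ range n, poissonPMF μ k * (n - min (k : ℝ) n) = 0 := fun k hk => by
    rw [min_eq_right (by exact_mod_cast not_lt.1 (mem_range.not.1 hk)), sub_self, mul_zero]
  have hsum : HasSum (fun k => poissonPMF μ k * min (k : ℝ) n)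
      (1 * n - ∑ k ∈ range n, poissonPMF μ k * (n - min (k : ℝ) n)) :=
    ((hasSum_poissonPMF μ).mul_right (n : ℝ)).sub (hasSum_sum_of_ne_finset_zero hdefect)
      |>.congr_fun fun k => by ring
  have hdefect_sum : ∑ k ∈ range n, poissonPMF μ k * (n - min (k : ℝ) n)
      = exp (-μ) * cumExpPartialSum n μ := by
    rw [← sum_range_sub_mul_pow_div_factorial, mul_sum]
    refine sum_congr rfl fun k hk => ?_
    rw [min_eq_left (by exact_mod_cast (mem_range.1 hk).le), poissonPMF]
    ring
  rw [expMinPois, hsum.tsum_eq, hdefect_sum, one_mul]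

lemma hasDerivAt_expMinPois (n : ℕ) (μ : ℝ) :
    HasDerivAt (fun μ => expMinPois μ n) (exp (-μ) * expPartialSum n μ) μ := by
  have hexp : HasDerivAt (fun y => exp (-y)) (-exp (-μ)) μ := by
    simpa using (hasDerivAt_neg μ).exp
  rw [funext (expMinPois_natCast n)]
  refine ((hasDerivAt_const μ (n : ℝ)).sub
    (hexp.mul (hasDerivAt_cumExpPartialSum n μ))).congr_deriv ?_
  rw [← cumExpPartialSum_sub_sum_expPartialSum]
  ring

lemma monotoneOn_expMinPois (n : ℕ) : MonotoneOn (fun μ => expMinPois μ n) (Set.Ici 0) := by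
  refine monotoneOn_of_hasDerivWithinAt_nonneg (convex_Ici 0)
    (fun μ _ => (hasDerivAt_expMinPois n μ).continuousAt.continuousWithinAt)
    (fun μ _ => (hasDerivAt_expMinPois n μ).hasDerivWithinAt) fun μ hμ => ?_
  rw [interior_Ici] at hμ
  exact mul_nonneg (exp_nonneg _) (expPartialSum_nonneg n hμ.le)

lemma antitoneOn_expMinPois_div (n : ℕ) :
    AntitoneOn (fun μ => expMinPois μ n / μ) (Set.Ioi 0) := by
  have hderiv : ∀ μ : ℝ, 0 < μ → HasDerivAt (fun μ => expMinPois μ n / μ)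
      ((exp (-μ) * expPartialSum n μ * μ - expMinPois μ n * 1) / μ ^ 2) μ :=
    fun μ hμ => (hasDerivAt_expMinPois n μ).div (hasDerivAt_id μ) hμ.ne'
  refine antitoneOn_of_hasDerivWithinAt_nonpos (convex_Ioi 0)
    (fun μ hμ => (hderiv μ hμ).continuousAt.continuousWithinAt)
    (fun μ hμ => (hderiv μ (interior_subset hμ)).hasDerivWithinAt) fun μ hμ => ?_
  rw [interior_Ioi] at hμ
  have hnum : exp (-μ) * expPartialSum n μ * μ - expMinPois μ n * 1
      = n * (exp (-μ) * expPartialSum (n + 1) μ - 1) := by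
    rw [expMinPois_natCast]
    linear_combination exp (-μ) * mul_expPartialSum_add_cumExpPartialSum n μ
  have hcdf : exp (-μ) * expPartialSum (n + 1) μ ≤ 1 := by
    calc exp (-μ) * expPartialSum (n + 1) μ ≤ exp (-μ) * exp μ :=
          mul_le_mul_of_nonneg_left (Real.sum_le_exp_of_nonneg hμ.le _) (exp_nonneg _)
      _ = 1 := by rw [← exp_add, neg_add_cancel, exp_zero]
  rw [hnum]
  exact div_nonpos_of_nonpos_of_nonneg
    (mul_nonpos_of_nonneg_of_nonpos n.cast_nonneg (by linarith)) (sq_nonneg μ)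

theorem stmt_2 (b : ℕ) (hb : 1 ≤ b) :
    (∀ s : ℝ, 0 < s → gFun b 1 ≤ gFun b s) ∧
    AntitoneOn (gFun b) (Set.Ioc (0 : ℝ) 1) ∧
    MonotoneOn (gFun b) (Set.Ici (1 : ℝ)) := by
  have hb₀ : (0 : ℝ) < b := by exact_mod_cast hb
  have hanti : AntitoneOn (gFun b) (Set.Ioc 0 1) := by
    intro s hs t ht hst
    simp only [gFun, max_eq_right hs.2, max_eq_right ht.2, one_mul]
    refine div_le_div_of_nonneg_right (monotoneOn_expMinPois b ?_ ?_ ?_) hb₀.le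
    · exact div_nonneg hb₀.le ht.1.le
    · exact div_nonneg hb₀.le hs.1.le
    · exact div_le_div_of_nonneg_left hb₀.le hs.1 hst
  have hmono : MonotoneOn (gFun b) (Set.Ici 1) := by
    intro s hs t ht hst
    have hs₀ : 0 < s := one_pos.trans_le hs
    simp only [gFun, max_eq_left (Set.mem_Ici.1 hs), max_eq_left (Set.mem_Ici.1 ht),
      mul_comm _ (expMinPois _ _), ← div_div_eq_mul_div]
    exact antitoneOn_expMinPois_div b (div_pos hb₀ (hs₀.trans_le hst)) (div_pos hb₀ hs₀)
      (div_le_div_of_nonneg_left hb₀.le hs₀ hst)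
  refine ⟨fun s hs => ?_, hanti, hmono⟩
  rcases le_total s 1 with h | h
  · exact hanti ⟨hs, h⟩ ⟨one_pos, le_rfl⟩ h
  · exact hmono Set.self_mem_Ici h h
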